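/- Under strict additivity, the population variances S²(z) take a common value S² for all treatment combinations z, and for every nonempty subset A ⊆ {1,…,K} the sampling variance of the estimated factorial effect under a completely randomized assignment is Var(τ̂_A) = (4/N) S². -/

import Mathlib

open Finset

noncomputable section

/-- A treatment combination in a 2^K factorial design: each of the K factors
is at its low level (`false`, coded −1) or high level (`true`, coded +1). -/
abbrev Combo (K : ℕ) := Fin K → Bool

/-- The completely randomized assignments: each of the 2^K treatment
combinations receives exactly `r` of the `N` units. -/
def Assignments (K N r : ℕ) : Finset (Fin N → Combo K) :=
  Finset.univ.filter (fun ω => ∀ z : Combo K, (Finset.univ.filter (fun i => ω i = z)).card = r)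

/-- Expectation over the uniform distribution on completely randomized assignments. -/
def expect (K N r : ℕ) (f : (Fin N → Combo K) → ℝ) : ℝ :=
  (∑ ω ∈ Assignments K N r, f ω) / ((Assignments K N r).card : ℝ)

/-- Variance over the uniform distribution on completely randomized assignments. -/
def variance (K N r : ℕ) (f : (Fin N → Combo K) → ℝ) : ℝ :=
  expect K N r (fun ω => (f ω - expect K N r f) ^ 2)

/-- Covariance over the uniform distribution on completely randomized assignments. -/
def covariance (K N r : ℕ) (f g : (Fin N → Combo K) → ℝ) : ℝ :=
  expect K N r (fun ω => (f ω - expect K N r f) * (g ω - expect K N r g))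

/-- The assignment indicator W_i(z). -/
def Wvar (K N : ℕ) (ω : Fin N → Combo K) (i : Fin N) (z : Combo K) : ℝ :=
  if ω i = z then 1 else 0

/-- The population mean Ȳ(z) of the potential outcomes under z. -/
def Ybar (K N : ℕ) (Y : Fin N → Combo K → ℝ) (z : Combo K) : ℝ :=
  (∑ i, Y i z) / (N : ℝ)

/-- The observed treatment mean Ȳ^obs(z) = (1/r) Σ_{i : W_i(z)=1} Y_i(z). -/
def YbarObs (K N r : ℕ) (Y : Fin N → Combo K → ℝ)
    (ω : Fin N → Combo K) (z : Combo K) : ℝ :=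
  (∑ i, if ω i = z then Y i z else 0) / (r : ℝ)

/-- Finite-population variance S²(z) (divisor N−1). -/
def Ssq (K N : ℕ) (Y : Fin N → Combo K → ℝ) (z : Combo K) : ℝ :=
  (∑ i, (Y i z - Ybar K N Y z) ^ 2) / ((N : ℝ) - 1)

/-- Finite-population covariance S²(z, z*) (divisor N−1). -/
def Scov (K N : ℕ) (Y : Fin N → Combo K → ℝ) (z zs : Combo K) : ℝ :=
  (∑ i, (Y i z - Ybar K N Y z) * (Y i zs - Ybar K N Y zs)) / ((N : ℝ) - 1)

/-- The contrast g_A(z) = Π_{k ∈ A} z_k ∈ {−1, +1}. -/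
def gA (K : ℕ) (A : Finset (Fin K)) (z : Combo K) : ℝ :=
  ∏ k ∈ A, (if z k then (1 : ℝ) else -1)

/-- The unit-level factorial effect τ_{iA} = 2^{−(K−1)} Σ_z g_A(z) Y_i(z). -/
def tauUnit (K N : ℕ) (Y : Fin N → Combo K → ℝ) (A : Finset (Fin K)) (i : Fin N) : ℝ :=
  (∑ z : Combo K, gA K A z * Y i z) / (2 : ℝ) ^ (K - 1)

/-- The population-level factorial effect τ̄_A = (1/N) Σ_i τ_{iA}. -/
def tauBar (K N : ℕ) (Y : Fin N → Combo K → ℝ) (A : Finset (Fin K)) : ℝ :=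
  (∑ i, tauUnit K N Y A i) / (N : ℝ)

/-- The estimated factorial effect τ̂_A = 2^{−(K−1)} Σ_z g_A(z) Ȳ^obs(z). -/
def tauHat (K N r : ℕ) (Y : Fin N → Combo K → ℝ) (A : Finset (Fin K))
    (ω : Fin N → Combo K) : ℝ :=
  (∑ z : Combo K, gA K A z * YbarObs K N r Y ω z) / (2 : ℝ) ^ (K - 1)

/-- The finite-population variance S_A² of the unit-level factorial effects. -/
def SsqA (K N : ℕ) (Y : Fin N → Combo K → ℝ) (A : Finset (Fin K)) : ℝ :=
  (∑ i, (tauUnit K N Y A i - tauBar K N Y A) ^ 2) / ((N : ℝ) - 1)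

/-- Strict additivity: unit-level differences of potential outcomes between any
two treatment combinations are constant across units. -/
def StrictAdditivity (K N : ℕ) (Y : Fin N → Combo K → ℝ) : Prop :=
  ∀ z zs : Combo K, ∀ i i' : Fin N, Y i z - Y i zs = Y i' z - Y i' zs

/-- Compound symmetry: common variance S² > 0 and common correlation ρ,
i.e. S²(z) = S² for all z and S²(z,z*) = ρ S² for all z ≠ z*. -/
def CompoundSymmetry (K N : ℕ) (Y : Fin N → Combo K → ℝ) (S2 ρ : ℝ) : Prop :=
  0 < S2 ∧ (∀ z : Combo K, Ssq K N Y z = S2) ∧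
    ∀ z zs : Combo K, z ≠ zs → Scov K N Y z zs = ρ * S2

/-! Under strict additivity `Y i z = Ȳ(z) + d i` with unit deviations `d` that do not depend on
`z`, so every `S²(z)` equals `∑ d i ^ 2 / (N - 1)`, and `τ̂_A` is a constant plus
`(2 / N) ∑ i, d i * g_A(W i)`, where `W i` is the treatment combination of unit `i`.
For `A ≠ ∅` the contrast `g_A` is `±1`-valued with `∑ z, g_A z = 0`, so in every balanced
assignment `∑ i, g_A(W i) = 0`; exchangeability of the units then gives `E g_A(W i) = 0` and
`E[g_A(W i) g_A(W j)] = -1 / (N - 1)` for `i ≠ j`. Hence `Var (∑ i, d i * g_A(W i)) = N S²`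
and `Var τ̂_A = (2 / N)² N S² = 4 S² / N`. -/

namespace Assignments

variable {K N r : ℕ}

lemma mem_iff {ω : Fin N → Combo K} :
    ω ∈ Assignments K N r ↔ ∀ z, (univ.filter fun i => ω i = z).card = r := by
  simp [Assignments]

lemma comp_perm_mem {ω : Fin N → Combo K} (hω : ω ∈ Assignments K N r)
    (π : Equiv.Perm (Fin N)) : ω ∘ π ∈ Assignments K N r := by
  rw [mem_iff] at hω ⊢
  intro z
  rw [← hω z]
  exact card_equiv π (by simp)

lemma sum_comp_perm (π : Equiv.Perm (Fin N)) (F : (Fin N → Combo K) → ℝ) :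
    ∑ ω ∈ Assignments K N r, F (ω ∘ π) = ∑ ω ∈ Assignments K N r, F ω :=
  sum_nbij' (· ∘ π) (· ∘ π.symm) (fun ω hω => comp_perm_mem hω π)
    (fun ω hω => comp_perm_mem hω π.symm) (fun ω _ => by ext; simp) (fun ω _ => by ext; simp)
    (fun _ _ => rfl)

lemma nonempty (hN : N = r * 2 ^ K) : (Assignments K N r).Nonempty := by
  have e : Fin N ≃ Combo K × Fin r :=
    Fintype.equivOfCardEq (by simp [hN, mul_comm])
  refine ⟨fun i => (e i).1, mem_iff.2 fun z => ?_⟩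
  rw [card_filter, ← e.symm.sum_comp, Fintype.sum_prod_type]
  simp

lemma sum_apply_eq_mul {ω : Fin N → Combo K} (hω : ω ∈ Assignments K N r)
    (G : Combo K → ℝ) : ∑ i, G (ω i) = r * ∑ z, G z := by
  rw [← sum_fiberwise' univ ω G, mul_sum]
  simp [mem_iff.1 hω]

lemma sum_apply_eq (G : Combo K → ℝ) (i i' : Fin N) :
    ∑ ω ∈ Assignments K N r, G (ω i) = ∑ ω ∈ Assignments K N r, G (ω i') := by
  rw [← sum_comp_perm (Equiv.swap i i')]
  simp

lemma sum_apply_apply_eq_of_ne (F : Combo K → Combo K → ℝ) {i j j' : Fin N} (hj : j ≠ i)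
    (hj' : j' ≠ i) :
    ∑ ω ∈ Assignments K N r, F (ω i) (ω j) = ∑ ω ∈ Assignments K N r, F (ω i) (ω j') := by
  rw [← sum_comp_perm (Equiv.swap j j')]
  simp [Equiv.swap_apply_of_ne_of_ne hj.symm hj'.symm]

variable {g : Combo K → ℝ}

lemma sum_apply_eq_zero (hg : ∑ z, g z = 0) (i : Fin N) :
    ∑ ω ∈ Assignments K N r, g (ω i) = 0 := by
  have hN : (N : ℝ) ≠ 0 := by have := i.pos; positivity
  have : (N : ℝ) * ∑ ω ∈ Assignments K N r, g (ω i) = 0 := calc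
    _ = ∑ i' : Fin N, ∑ ω ∈ Assignments K N r, g (ω i') := by simp [sum_apply_eq g _ i]
    _ = ∑ ω ∈ Assignments K N r, ∑ i', g (ω i') := sum_comm
    _ = 0 := sum_eq_zero fun ω hω => by rw [sum_apply_eq_mul hω, hg, mul_zero]
  exact (mul_eq_zero.1 this).resolve_left hN

lemma sub_one_mul_sum_apply_mul_apply (hg : ∑ z, g z = 0) {i j : Fin N} (hij : j ≠ i) :
    ((N : ℝ) - 1) * ∑ ω ∈ Assignments K N r, g (ω i) * g (ω j) =
      -∑ ω ∈ Assignments K N r, g (ω i) ^ 2 := by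
  set P := fun j => ∑ ω ∈ Assignments K N r, g (ω i) * g (ω j) with hP
  -- The row sum vanishes because every level receives `r` units, and all its off-diagonal
  -- entries agree because swapping two units other than `i` permutes the assignments.
  have hrow : ∑ j', P j' = 0 := by
    rw [sum_comm]
    exact sum_eq_zero fun ω hω => by rw [← mul_sum, sum_apply_eq_mul hω, hg, mul_zero, mul_zero]
  have hP' : ∀ j', P j' = P j + if j' = i then P i - P j else 0 := by
    intro j'
    split_ifs with h
    · rw [h]; ring
    · rw [add_zero]; exact sum_apply_apply_eq_of_ne (fun a b => g a * g b) h hij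
  rw [sum_congr rfl fun j' _ => hP' j', sum_add_distrib, sum_ite_eq'] at hrow
  simp only [sum_const, card_univ, Fintype.card_fin, nsmul_eq_mul, mem_univ, if_true] at hrow
  have hPi : P i = ∑ ω ∈ Assignments K N r, g (ω i) ^ 2 := by simp only [hP, sq]
  linarith

lemma sub_one_mul_sum_sq_sum_mul_apply (hg : ∑ z, g z = 0) (hg1 : ∀ z, g z ^ 2 = 1)
    {d : Fin N → ℝ} (hd : ∑ i, d i = 0) :
    ((N : ℝ) - 1) * ∑ ω ∈ Assignments K N r, (∑ i, d i * g (ω i)) ^ 2 =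
      N * (#(Assignments K N r) : ℝ) * ∑ i, d i ^ 2 := by
  set M : ℝ := (#(Assignments K N r) : ℝ)
  have hpair : ∀ i j, ((N : ℝ) - 1) * ∑ ω ∈ Assignments K N r, g (ω i) * g (ω j) =
      M * ((if j = i then (N : ℝ) else 0) - 1) := by
    intro i j
    by_cases h : j = i
    · simp only [h, ← sq, hg1, sum_const, nsmul_eq_mul, mul_one, ↓reduceIte, M]
      ring
    · simp [sub_one_mul_sum_apply_mul_apply hg h, hg1, h, M]
  calc ((N : ℝ) - 1) * ∑ ω ∈ Assignments K N r, (∑ i, d i * g (ω i)) ^ 2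
      = ∑ i, ∑ j, d i * d j * (((N : ℝ) - 1) *
          ∑ ω ∈ Assignments K N r, g (ω i) * g (ω j)) := by
        simp_rw [sq, sum_mul_sum, mul_sum]
        rw [sum_comm]
        refine sum_congr rfl fun i _ => ?_
        rw [sum_comm]
        refine sum_congr rfl fun j _ => sum_congr rfl fun ω _ => by ring
    _ = ∑ i, ∑ j, d i * d j * (M * ((if j = i then (N : ℝ) else 0) - 1)) := by simp only [hpair]
    _ = N * M * ∑ i, d i ^ 2 := by
        simp only [mul_sub, mul_ite, mul_zero, mul_one, sum_sub_distrib, sum_ite_eq', mem_univ,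
          ↓reduceIte, ← sum_mul, ← mul_sum, hd, zero_mul, sub_zero, sq]
        ring

end Assignments

section Moments

variable {K N r : ℕ}

lemma expect_congr {f f' : (Fin N → Combo K) → ℝ} (h : ∀ ω ∈ Assignments K N r, f ω = f' ω) :
    expect K N r f = expect K N r f' := by
  rw [_root_.expect, _root_.expect, sum_congr rfl h]

lemma variance_congr {f f' : (Fin N → Combo K) → ℝ}
    (h : ∀ ω ∈ Assignments K N r, f ω = f' ω) : variance K N r f = variance K N r f' := by
  rw [variance, variance, _root_.expect_congr h]
  exact _root_.expect_congr fun ω hω => by rw [h ω hω]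

lemma expect_const_add_mul (hne : (Assignments K N r).Nonempty) (c a : ℝ)
    (f : (Fin N → Combo K) → ℝ) :
    expect K N r (fun ω => c + a * f ω) = c + a * expect K N r f := by
  rw [_root_.expect, _root_.expect, sum_add_distrib, sum_const, ← mul_sum, nsmul_eq_mul]
  field_simp [hne.card_pos.ne']

lemma expect_const_mul (a : ℝ) (f : (Fin N → Combo K) → ℝ) :
    expect K N r (fun ω => a * f ω) = a * expect K N r f := by
  rw [_root_.expect, _root_.expect, ← mul_sum, mul_div_assoc]

lemma variance_const_add_mul (c a : ℝ) (f : (Fin N → Combo K) → ℝ) :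
    variance K N r (fun ω => c + a * f ω) = a ^ 2 * variance K N r f := by
  rcases (Assignments K N r).eq_empty_or_nonempty with hempty | hne
  · simp [variance, _root_.expect, hempty]
  rw [variance, variance, expect_const_add_mul hne, ← expect_const_mul (a ^ 2)]
  congr 1
  ext ω
  ring

lemma variance_sum_mul_apply (hne : (Assignments K N r).Nonempty) {g : Combo K → ℝ}
    (hg : ∑ z, g z = 0) (hg1 : ∀ z, g z ^ 2 = 1) {d : Fin N → ℝ} (hd : ∑ i, d i = 0) :
    ((N : ℝ) - 1) * variance K N r (fun ω => ∑ i, d i * g (ω i)) = N * ∑ i, d i ^ 2 := by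
  have hE : expect K N r (fun ω => ∑ i, d i * g (ω i)) = 0 := by
    simp [_root_.expect, sum_comm (s := Assignments K N r), ← mul_sum,
      Assignments.sum_apply_eq_zero hg]
  rw [variance, hE, _root_.expect]
  simp only [sub_zero]
  rw [mul_div_assoc', Assignments.sub_one_mul_sum_sq_sum_mul_apply hg hg1 hd]
  field_simp [hne.card_pos.ne']

end Moments

lemma gA_sq (K : ℕ) (A : Finset (Fin K)) (z : Combo K) : gA K A z ^ 2 = 1 := by
  rw [gA, ← prod_pow]
  exact prod_eq_one fun k _ => by split_ifs <;> norm_num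

lemma sum_gA_eq_zero {K : ℕ} {A : Finset (Fin K)} (hA : A.Nonempty) : ∑ z, gA K A z = 0 := by
  obtain ⟨a, ha⟩ := hA
  simp only [gA, ← Fintype.prod_ite_mem A]
  rw [← Fintype.prod_sum fun i (b : Bool) => if i ∈ A then (if b then (1 : ℝ) else -1) else 1]
  exact prod_eq_zero (mem_univ a) (by simp [ha])

lemma StrictAdditivity.sub_Ybar_eq {K N : ℕ} {Y : Fin N → Combo K → ℝ}
    (hadd : StrictAdditivity K N Y) (i : Fin N) (z z' : Combo K) :
    Y i z - Ybar K N Y z = Y i z' - Ybar K N Y z' := by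
  have hN : (N : ℝ) ≠ 0 := by have := i.pos; positivity
  have : Ybar K N Y z - Ybar K N Y z' = Y i z - Y i z' := by
    rw [Ybar, Ybar, ← sub_div, ← sum_sub_distrib, sum_congr rfl fun j _ => hadd z z' j i,
      sum_const, card_univ, Fintype.card_fin, nsmul_eq_mul, mul_div_cancel_left₀ _ hN]
  linarith

lemma sum_sub_Ybar_eq_zero {K N : ℕ} (Y : Fin N → Combo K → ℝ) (z : Combo K) :
    ∑ i, (Y i z - Ybar K N Y z) = 0 := by
  rcases Nat.eq_zero_or_pos N with h | h
  · subst h; simp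
  rw [sum_sub_distrib, sum_const, card_univ, Fintype.card_fin, nsmul_eq_mul, Ybar]
  field_simp
  ring

lemma YbarObs_eq_Ybar_add {K N r : ℕ} (hr : r ≠ 0) (Y : Fin N → Combo K → ℝ)
    {ω : Fin N → Combo K} (hω : ω ∈ Assignments K N r) (z : Combo K) :
    YbarObs K N r Y ω z =
      Ybar K N Y z + (∑ i, if ω i = z then Y i z - Ybar K N Y z else 0) / r := by
  have hcount : ∑ i, (if ω i = z then Ybar K N Y z else 0) = r * Ybar K N Y z := by
    rw [sum_ite, sum_const_zero, add_zero, sum_const, nsmul_eq_mul, Assignments.mem_iff.1 hω z]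
  have hsplit : ∑ i, (if ω i = z then Y i z - Ybar K N Y z else 0) =
      ∑ i, (if ω i = z then Y i z else 0) - r * Ybar K N Y z := by
    rw [← hcount, ← sum_sub_distrib]
    exact sum_congr rfl fun i _ => by split_ifs <;> ring
  rw [YbarObs, hsplit]
  field_simp
  ring

lemma tauHat_eq_add_sum {K N r : ℕ} (hr : r ≠ 0) (Y : Fin N → Combo K → ℝ) (A : Finset (Fin K))
    {ω : Fin N → Combo K} (hω : ω ∈ Assignments K N r) :
    tauHat K N r Y A ω = (∑ z, gA K A z * Ybar K N Y z) / 2 ^ (K - 1) +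
      ((r : ℝ) * 2 ^ (K - 1))⁻¹ * ∑ i, (Y i (ω i) - Ybar K N Y (ω i)) * gA K A (ω i) := by
  have hswap : ∑ z, gA K A z * (∑ i, if ω i = z then Y i z - Ybar K N Y z else 0) =
      ∑ i, (Y i (ω i) - Ybar K N Y (ω i)) * gA K A (ω i) := by
    simp_rw [mul_sum]
    rw [sum_comm]
    simp [mul_ite, mul_comm]
  rw [tauHat, sum_congr rfl fun z _ => by rw [YbarObs_eq_Ybar_add hr Y hω z], ← hswap]
  simp only [mul_add, sum_add_distrib, mul_div_assoc', ← sum_div]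
  field_simp

/-- Corollary 1. Under strict additivity the S²(z) share a common
value S², and Var(τ̂_A) = (4/N) S² for every nonempty A. -/
theorem tauHat_variance_additive (K N r : ℕ) (hK : 1 ≤ K) (hr : 0 < r)
    (hN : N = r * 2 ^ K) (Y : Fin N → Combo K → ℝ)
    (hadd : StrictAdditivity K N Y) :
    ∃ S2 : ℝ, (∀ z : Combo K, Ssq K N Y z = S2) ∧
      ∀ A : Finset (Fin K), A.Nonempty →
        variance K N r (tauHat K N r Y A) = (4 / (N : ℝ)) * S2 := by
  set z₀ : Combo K := fun _ => false
  set d : Fin N → ℝ := fun i => Y i z₀ - Ybar K N Y z₀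
  have hd : ∀ i z, Y i z - Ybar K N Y z = d i := fun i z => hadd.sub_Ybar_eq i z z₀
  refine ⟨Ssq K N Y z₀, fun z => by simp only [Ssq, hd], fun A hA => ?_⟩
  have hNr : (N : ℝ) = 2 * (r * 2 ^ (K - 1)) := by
    rw [hN, ← Nat.sub_add_cancel hK]; push_cast; ring
  have hN1 : (N : ℝ) - 1 ≠ 0 := by
    have : (1 : ℝ) ≤ r * 2 ^ (K - 1) := by exact_mod_cast Nat.one_le_iff_ne_zero.2 (by positivity)
    linarith
  have hT := variance_sum_mul_apply (Assignments.nonempty hN) (sum_gA_eq_zero hA) (gA_sq K A)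
    (show ∑ i, d i = 0 from sum_sub_Ybar_eq_zero Y z₀)
  rw [variance_congr fun ω hω => tauHat_eq_add_sum hr.ne' Y A hω, variance_const_add_mul, Ssq]
  simp only [hd]
  rw [← mul_div_cancel_left₀ (variance K N r _) hN1, hT, hNr]
  field_simp
  ring
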